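/- arXiv:2308.13298 — 4 statements merged into one kernel-verified Lean document; each statement's English description precedes it below -/
import Mathlib

section
/- Let A and B be d×d real positive definite matrices with A ⪰ B (i.e. A − B is positive semidefinite). Then for every x ∈ ℝ^d, xᵀAx ≤ (det A / det B) · xᵀBx. -/
open Matrix
open scoped MatrixOrder

/-! Write `B = Cᴴ C` with `C` invertible. The congruent matrix `M = C⁻ᴴ A C⁻¹` satisfies `1 ⪯ M`, so
every eigenvalue of `M` is at least `1` and hence at most the product of all of them,
`det M = det A / det B`. Thus `M ⪯ (det M) • 1`, and congruence by `C` gives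
`A ⪯ (det A / det B) • B`. -/

theorem Finset.single_le_prod_of_one_le {ι R : Type*} [CommSemiring R] [PartialOrder R]
    [IsOrderedRing R] {s : Finset ι} {f : ι → R} (hf : ∀ i ∈ s, 1 ≤ f i) {i : ι} (hi : i ∈ s) :
    f i ≤ ∏ j ∈ s, f j := by
  classical
  rw [← Finset.mul_prod_erase s f hi]
  exact le_mul_of_one_le_right (zero_le_one.trans (hf i hi))
    (Finset.one_le_prod fun j hj => hf j (Finset.mem_of_mem_erase hj))

namespace Matrix

variable {n : Type*} [Fintype n] [DecidableEq n]

theorem le_det_smul_one_of_one_le {M : Matrix n n ℝ} (h : 1 ≤ M) : M ≤ M.det • 1 := by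
  have hM : M.IsHermitian := by simpa using (le_iff.1 h).isHermitian.add isHermitian_one
  have heig : ∀ i, 1 ≤ hM.eigenvalues i := by
    have := (algebraMap_le_iff_le_spectrum (r := (1 : ℝ)) (a := M)).1 (by simpa using h)
    simpa [hM.spectrum_real_eq_range_eigenvalues] using this
  rw [← Algebra.algebraMap_eq_smul_one, le_algebraMap_iff_spectrum_le,
    hM.spectrum_real_eq_range_eigenvalues]
  rintro _ ⟨i, rfl⟩
  simpa [hM.det_eq_prod_eigenvalues] using
    Finset.single_le_prod_of_one_le (fun j _ => heig j) (Finset.mem_univ i)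

theorem PosDef.exists_units_eq_star_mul_self {B : Matrix n n ℝ} (hB : B.PosDef) :
    ∃ u : (Matrix n n ℝ)ˣ, B = star (u : Matrix n n ℝ) * u := by
  have hS : IsUnit (CFC.sqrt B) := (CFC.isUnit_sqrt_iff B hB.posSemidef.nonneg).2 hB.isUnit
  refine ⟨hS.unit, ?_⟩
  rw [IsUnit.unit_spec, (CFC.sqrt_nonneg B).isSelfAdjoint.star_eq,
    CFC.sqrt_mul_sqrt_self B hB.posSemidef.nonneg]

theorem PosDef.le_det_div_det_smul_of_le {A B : Matrix n n ℝ} (hB : B.PosDef) (hBA : B ≤ A) :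
    A ≤ (A.det / B.det) • B := by
  obtain ⟨u, hu⟩ := hB.exists_units_eq_star_mul_self
  set C : Matrix n n ℝ := ↑u
  set D : Matrix n n ℝ := ↑u⁻¹
  have hCD : C * D = 1 := u.mul_inv
  have hDC : D * C = 1 := u.inv_mul
  set M := star D * A * D
  have h1M : 1 ≤ M := by
    have hB1 : star D * B * D = 1 := by
      rw [hu, ← mul_assoc, ← star_mul, mul_assoc, hCD, star_one, one_mul]
    exact hB1 ▸ star_left_conjugate_le_conjugate hBA D
  have hAM : A = star C * M * C := by
    simp only [M, ← mul_assoc, ← star_mul, hDC, star_one, one_mul]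
    rw [mul_assoc, hDC, mul_one]
  have hdet : M.det = A.det / B.det := by
    rw [eq_div_iff hB.det_pos.ne', hu]
    calc M.det * (star C * C).det = A.det * ((star (C * D)).det * (D * C).det) := by
          simp only [M, det_mul, star_mul]; ring
      _ = A.det := by rw [hCD, hDC]; simp
  calc A = star C * M * C := hAM
    _ ≤ star C * (M.det • 1) * C :=
      star_left_conjugate_le_conjugate (le_det_smul_one_of_one_le h1M) _
    _ = (A.det / B.det) • B := by
      rw [hdet, hu, mul_smul_comm, mul_one, smul_mul_assoc]

end Matrix

theorem quadratic_form_det_ratio_general {d : ℕ} (A B : Matrix (Fin d) (Fin d) ℝ)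
    (hB : B.PosDef) (hAB : (A - B).PosSemidef)
    (x : Fin d → ℝ) :
    x ⬝ᵥ A *ᵥ x ≤ (A.det / B.det) * (x ⬝ᵥ B *ᵥ x) := by
  have hle := le_iff.1 (hB.le_det_div_det_smul_of_le (le_iff.2 hAB))
  have hquad := hle.dotProduct_mulVec_nonneg x
  simp only [star_trivial, sub_mulVec, smul_mulVec, dotProduct_sub, dotProduct_smul,
    smul_eq_mul] at hquad
  linarith

/-- If `A ⪰ B` are positive definite, then
`xᵀAx ≤ (det A / det B) · xᵀBx` for every `x`. -/
theorem quadratic_form_det_ratio {d : ℕ} (A B : Matrix (Fin d) (Fin d) ℝ)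
    (hA : A.PosDef) (hB : B.PosDef) (hAB : (A - B).PosSemidef)
    (x : Fin d → ℝ) :
    x ⬝ᵥ A *ᵥ x ≤ (A.det / B.det) * (x ⬝ᵥ B *ᵥ x) :=
  quadratic_form_det_ratio_general A B hB hAB x
end

section
/- Let A and B be d×d real positive definite matrices with A ⪰ B (i.e. A − B is positive semidefinite). Then for every x ∈ ℝ^d, xᵀB⁻¹x ≤ (det A / det B) · xᵀA⁻¹x; equivalently ‖x‖_{B⁻¹} ≤ ‖x‖_{A⁻¹} · √(det A / det B). -/
open Matrix

/-!
Conjugating by `B^{-1/2}` turns `B ⪯ A` into `1 ⪯ N` with `N = B^{-1/2} A B^{-1/2}` and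
`det N = det A / det B`. All eigenvalues of `N` are at least `1`, so each is at most their
product `det N`; hence the eigenvalues `det N / μ` of `det N • N⁻¹` are at least `1`.
Conjugating `1 ⪯ det N • N⁻¹` back by `B^{-1/2}` gives `B⁻¹ ⪯ (det A / det B) • A⁻¹`.
-/

open scoped MatrixOrder

namespace Matrix

variable {n : Type*} [Fintype n]

theorem dotProduct_mulVec_le_of_le {M N : Matrix n n ℝ} (h : M ≤ N) (x : n → ℝ) :
    x ⬝ᵥ M *ᵥ x ≤ x ⬝ᵥ N *ᵥ x := by
  simpa [sub_mulVec, dotProduct_sub] using (le_iff.mp h).dotProduct_mulVec_nonneg x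

variable [DecidableEq n]

theorem IsHermitian.eigenvalues_le_det_of_one_le {N : Matrix n n ℝ} (hN : N.IsHermitian)
    (h1 : ∀ i, 1 ≤ hN.eigenvalues i) (i : n) : hN.eigenvalues i ≤ N.det := by
  rw [hN.det_eq_prod_eigenvalues]
  exact Multiset.mem_le_prod_of_one_le h1 (Finset.mem_univ i)

theorem one_le_det_smul_inv_of_one_le {N : Matrix n n ℝ} (hN : 1 ≤ N) : 1 ≤ N.det • N⁻¹ := by
  have hH : N.IsHermitian := by
    simpa only [sub_add_cancel] using (le_iff.mp hN).isHermitian.add isHermitian_one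
  have hspec : ∀ x ∈ spectrum ℝ N, 1 ≤ x := (CFC.one_le_iff N).mp hN
  have hne : ∀ x ∈ spectrum ℝ N, x ≠ 0 := fun x hx => (zero_lt_one.trans_le (hspec x hx)).ne'
  have hunit : IsUnit N := (spectrum.zero_notMem_iff ℝ).mp fun h => hne 0 h rfl
  have hcont : ContinuousOn (fun x : ℝ => x⁻¹) (spectrum ℝ N) := continuousOn_inv₀.mono hne
  rw [nonsing_inv_eq_ringInverse, ← cfc_ringInverse_id (R := ℝ) N hunit,
    ← cfc_const_mul _ _ N hcont,
    one_le_cfc_iff (fun x => N.det * x⁻¹) N (continuousOn_const.mul hcont)]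
  rw [hH.spectrum_real_eq_range_eigenvalues] at hspec ⊢
  rintro _ ⟨i, rfl⟩
  have h1 : ∀ j, 1 ≤ hH.eigenvalues j := fun j => hspec _ ⟨j, rfl⟩
  rw [← div_eq_mul_inv, one_le_div (zero_lt_one.trans_le (h1 i))]
  exact hH.eigenvalues_le_det_of_one_le h1 i

theorem inv_le_det_div_det_smul_inv {A B : Matrix n n ℝ} (hB : B.PosDef) (hBA : B ≤ A) :
    B⁻¹ ≤ (A.det / B.det) • A⁻¹ := by
  set T := CFC.sqrt B
  have hT : IsSelfAdjoint T := IsSelfAdjoint.of_nonneg (CFC.sqrt_nonneg B)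
  have hTT : T * T = B := CFC.sqrt_mul_sqrt_self B hB.posSemidef.nonneg
  have hTdet : IsUnit T.det := by
    rw [← isUnit_iff_isUnit_det]
    exact isUnit_of_mul_isUnit_left (hTT ▸ hB.isUnit)
  have hTinv : IsSelfAdjoint T⁻¹ := IsHermitian.inv hT
  have hB_conj : T⁻¹ * B * T⁻¹ = 1 := by
    rw [← hTT, ← Matrix.mul_assoc, nonsing_inv_mul _ hTdet, Matrix.one_mul,
      mul_nonsing_inv _ hTdet]
  set N := T⁻¹ * A * T⁻¹
  have h1N : 1 ≤ N := hB_conj ▸ hTinv.conjugate_le_conjugate hBA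
  have hdetN : N.det = A.det / B.det := by
    rw [det_mul, det_mul, det_nonsing_inv, ← hTT, det_mul, Ring.inverse_eq_inv']
    field_simp [hTdet.ne_zero]
  have hNinv_conj : T⁻¹ * N⁻¹ * T⁻¹ = A⁻¹ := by
    rw [Matrix.mul_inv_rev, Matrix.mul_inv_rev, nonsing_inv_nonsing_inv _ hTdet,
      ← Matrix.mul_assoc T⁻¹ T, nonsing_inv_mul _ hTdet, Matrix.one_mul, Matrix.mul_assoc,
      mul_nonsing_inv _ hTdet, Matrix.mul_one]
  calc B⁻¹ = T⁻¹ * 1 * T⁻¹ := by rw [← hTT, Matrix.mul_inv_rev, Matrix.mul_one]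
    _ ≤ T⁻¹ * (N.det • N⁻¹) * T⁻¹ :=
      hTinv.conjugate_le_conjugate (one_le_det_smul_inv_of_one_le h1N)
    _ = (A.det / B.det) • A⁻¹ := by rw [Matrix.mul_smul, Matrix.smul_mul, hNinv_conj, hdetN]

end Matrix

/-- If `A ⪰ B` are positive definite, then
`xᵀB⁻¹x ≤ (det A / det B) · xᵀA⁻¹x`; equivalently
`‖x‖_{B⁻¹} ≤ ‖x‖_{A⁻¹}·√(det A / det B)`. -/
theorem inv_quadratic_form_det_ratio {d : ℕ} (A B : Matrix (Fin d) (Fin d) ℝ)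
    (hA : A.PosDef) (hB : B.PosDef) (hAB : (A - B).PosSemidef)
    (x : Fin d → ℝ) :
    x ⬝ᵥ B⁻¹ *ᵥ x ≤ (A.det / B.det) * (x ⬝ᵥ A⁻¹ *ᵥ x) ∧
    Real.sqrt (x ⬝ᵥ B⁻¹ *ᵥ x)
      ≤ Real.sqrt (x ⬝ᵥ A⁻¹ *ᵥ x) * Real.sqrt (A.det / B.det) := by
  have hquad : x ⬝ᵥ B⁻¹ *ᵥ x ≤ (A.det / B.det) * (x ⬝ᵥ A⁻¹ *ᵥ x) := by
    simpa [smul_mulVec, dotProduct_smul] using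
      dotProduct_mulVec_le_of_le (inv_le_det_div_det_smul_inv hB (le_iff.mpr hAB)) x
  refine ⟨hquad, ?_⟩
  rw [mul_comm, ← Real.sqrt_mul (div_pos hA.det_pos hB.det_pos).le]
  exact Real.sqrt_le_sqrt hquad
end

section
/- (Elliptical potential lemma) Let V₀ be a d×d real positive definite matrix, let x_1, …, x_n ∈ ℝ^d, and define V_t := V₀ + Σ_{s=1}^{t} x_s x_sᵀ for t = 0, 1, …, n. Then Σ_{t=1}^{n} min(1, x_tᵀ V_{t-1}⁻¹ x_t) ≤ 2 log(det V_n / det V₀). -/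
/-!
By the matrix determinant lemma, `det V_{t+1} = det V_t * (1 + x_tᵀ V_t⁻¹ x_t)`, so
`log (det V_n / det V₀)` telescopes into `∑ t, log (1 + u_t)` with `u_t = x_tᵀ V_t⁻¹ x_t ≥ 0`,
and `log (1 + u) ≥ 2u / (u + 2) ≥ min 1 u / 2` for `u ≥ 0`.
-/

open Matrix Finset

theorem Matrix.det_add_vecMulVec {m R : Type*} [Fintype m] [DecidableEq m] [CommRing R]
    {A : Matrix m m R} (hA : IsUnit A.det) (u v : m → R) :
    (A + vecMulVec u v).det = A.det * (1 + v ⬝ᵥ A⁻¹ *ᵥ u) := by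
  rw [vecMulVec_eq Unit, det_add_replicateCol_mul_replicateRow (ι := Unit) hA,
    det_unique (n := Unit), Matrix.mul_assoc, ← replicateCol_mulVec]
  simp

theorem Real.min_one_le_two_mul_log_one_add {u : ℝ} (hu : 0 ≤ u) :
    min 1 u ≤ 2 * Real.log (1 + u) :=
  calc min 1 u ≤ 2 * (2 * u / (u + 2)) := by
        rw [← mul_div_assoc, le_div_iff₀ (by positivity)]
        rcases min_cases 1 u with ⟨h, _⟩ | ⟨h, _⟩ <;> rw [h] <;> nlinarith
    _ ≤ 2 * Real.log (1 + u) := by gcongr; exact Real.le_log_one_add_of_nonneg hu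

theorem Matrix.PosDef.dotProduct_inv_mulVec_self_nonneg {m : Type*} [Fintype m] [DecidableEq m]
    {M : Matrix m m ℝ} (hM : M.PosDef) (v : m → ℝ) : 0 ≤ v ⬝ᵥ M⁻¹ *ᵥ v := by
  simpa using hM.inv.posSemidef.dotProduct_mulVec_nonneg v

section DesignMatrix

variable {m : Type*} {V₀ : Matrix m m ℝ} (x : ℕ → m → ℝ)

def designMatrix (V₀ : Matrix m m ℝ) (t : ℕ) : Matrix m m ℝ :=
  V₀ + ∑ s ∈ range t, vecMulVec (x s) (x s)

theorem designMatrix_succ (t : ℕ) :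
    designMatrix x V₀ (t + 1) = designMatrix x V₀ t + vecMulVec (x t) (x t) := by
  rw [designMatrix, designMatrix, sum_range_succ, add_assoc]

theorem posDef_designMatrix [Fintype m] (hV₀ : V₀.PosDef) (t : ℕ) :
    (designMatrix x V₀ t).PosDef := by
  refine hV₀.add_posSemidef (posSemidef_sum _ fun s _ => ?_)
  simpa using posSemidef_vecMulVec_self_star (x s)

theorem det_designMatrix [Fintype m] [DecidableEq m] (hV₀ : V₀.PosDef) (n : ℕ) :
    (designMatrix x V₀ n).det =
      V₀.det * ∏ t ∈ range n, (1 + x t ⬝ᵥ (designMatrix x V₀ t)⁻¹ *ᵥ x t) := by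
  induction n with
  | zero => simp [designMatrix]
  | succ n ih =>
    have hdet : IsUnit (designMatrix x V₀ n).det :=
      (posDef_designMatrix x hV₀ n).isUnit.map detMonoidHom
    rw [designMatrix_succ, det_add_vecMulVec hdet, ih, prod_range_succ, mul_assoc]

theorem log_det_designMatrix_div_det [Fintype m] [DecidableEq m] (hV₀ : V₀.PosDef) (n : ℕ) :
    Real.log ((designMatrix x V₀ n).det / V₀.det) =
      ∑ t ∈ range n, Real.log (1 + x t ⬝ᵥ (designMatrix x V₀ t)⁻¹ *ᵥ x t) := by
  rw [det_designMatrix x hV₀, mul_div_cancel_left₀ _ hV₀.det_pos.ne', Real.log_prod]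
  intro t _
  have := (posDef_designMatrix x hV₀ t).dotProduct_inv_mulVec_self_nonneg (x t)
  positivity

end DesignMatrix

/-- Elliptical potential lemma: with `V_t = V₀ + Σ_{s<t} x_s x_sᵀ`,
`Σ_{t=1}^{n} min(1, x_tᵀ V_{t-1}⁻¹ x_t) ≤ 2 log(det V_n / det V₀)`. -/
theorem elliptical_potential {d n : ℕ} (V₀ : Matrix (Fin d) (Fin d) ℝ)
    (hV₀ : V₀.PosDef) (x : ℕ → (Fin d → ℝ))
    (V : ℕ → Matrix (Fin d) (Fin d) ℝ)
    (hV : ∀ t, V t = V₀ + ∑ s ∈ Finset.range t, vecMulVec (x s) (x s)) :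
    ∑ t ∈ Finset.range n, min 1 (x t ⬝ᵥ (V t)⁻¹ *ᵥ x t)
      ≤ 2 * Real.log ((V n).det / V₀.det) := by
  obtain rfl : V = designMatrix x V₀ := funext hV
  rw [log_det_designMatrix_div_det x hV₀, mul_sum]
  exact sum_le_sum fun t _ => Real.min_one_le_two_mul_log_one_add
    ((posDef_designMatrix x hV₀ t).dotProduct_inv_mulVec_self_nonneg (x t))
end

section
/- Let V be a d×d real positive definite matrix and N a d×d real positive semidefinite matrix with V ⪰ N. If the operator norm of N satisfies ‖N‖ ≤ γ_max and θ ∈ ℝ^d satisfies ‖θ‖ ≤ S, then ‖Nθ‖_{V⁻¹} ≤ S·√(γ_max); more precisely, (Nθ)ᵀ V⁻¹ (Nθ) ≤ θᵀ N θ ≤ γ_max · S². -/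
/-!
With `w := V⁻¹Nθ`, the two nonnegative quadratic forms `(θ - w)ᵀN(θ - w)` and `wᵀ(V - N)w` add
up to `θᵀNθ - (Nθ)ᵀV⁻¹(Nθ)`, which gives the first inequality. The second is Cauchy–Schwarz
together with `‖Nθ‖ ≤ ‖N‖‖θ‖`.
-/

open Matrix
open scoped Matrix.Norms.L2Operator

namespace Matrix

variable {n : Type*} [Fintype n]

theorem IsHermitian.dotProduct_mulVec_comm {A : Matrix n n ℝ} (hA : A.IsHermitian)
    (x y : n → ℝ) : x ⬝ᵥ A *ᵥ y = y ⬝ᵥ A *ᵥ x := by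
  rw [dotProduct_mulVec, ← mulVec_transpose, ← conjTranspose_eq_transpose_of_trivial, hA.eq,
    dotProduct_comm]

theorem dotProduct_mulVec_self_le_l2_opNorm [DecidableEq n] (A : Matrix n n ℝ) (x : n → ℝ) :
    x ⬝ᵥ A *ᵥ x ≤ ‖A‖ * (x ⬝ᵥ x) := by
  set e := (EuclideanSpace.equiv n ℝ).symm
  have hinner : ∀ y z : n → ℝ, inner ℝ (e y) (e z) = y ⬝ᵥ z := fun y z => by
    simp [e, EuclideanSpace.inner_eq_star_dotProduct, dotProduct_comm]
  calc x ⬝ᵥ A *ᵥ x = inner ℝ (e x) (e (A *ᵥ x)) := (hinner _ _).symm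
    _ ≤ ‖e x‖ * ‖e (A *ᵥ x)‖ := real_inner_le_norm _ _
    _ ≤ ‖e x‖ * (‖A‖ * ‖e x‖) := by gcongr; exact A.l2_opNorm_mulVec _
    _ = ‖A‖ * (x ⬝ᵥ x) := by
      rw [← hinner, real_inner_self_eq_norm_sq]; ring

variable [DecidableEq n]

theorem dotProduct_mulVec_nonsing_inv_le {V N : Matrix n n ℝ} (hV : V.PosDef)
    (hN : N.PosSemidef) (hVN : (V - N).PosSemidef) (x : n → ℝ) :
    (N *ᵥ x) ⬝ᵥ V⁻¹ *ᵥ (N *ᵥ x) ≤ x ⬝ᵥ N *ᵥ x := by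
  set w := V⁻¹ *ᵥ (N *ᵥ x)
  have hVw : V *ᵥ w = N *ᵥ x := by
    rw [mulVec_mulVec, mul_nonsing_inv V (isUnit_iff_ne_zero.mpr hV.det_pos.ne'), one_mulVec]
  have hsum : (x - w) ⬝ᵥ N *ᵥ (x - w) + w ⬝ᵥ (V - N) *ᵥ w = x ⬝ᵥ N *ᵥ x - w ⬝ᵥ N *ᵥ x := by
    have hsymm := hN.isHermitian.dotProduct_mulVec_comm x w
    simp only [mulVec_sub, sub_mulVec, dotProduct_sub, sub_dotProduct, hVw] at hsymm ⊢
    linarith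
  have h₁ : 0 ≤ (x - w) ⬝ᵥ N *ᵥ (x - w) := by simpa using hN.dotProduct_mulVec_nonneg (x - w)
  have h₂ : 0 ≤ w ⬝ᵥ (V - N) *ᵥ w := by simpa using hVN.dotProduct_mulVec_nonneg w
  rw [dotProduct_comm]
  linarith

end Matrix

/-- Bias bound for the channel-noise regularizer: if `V ⪰ N ⪰ 0`, `V` is
positive definite, `‖N‖ ≤ γ_max` (operator norm) and `‖θ‖ ≤ S`, then
`(Nθ)ᵀV⁻¹(Nθ) ≤ θᵀNθ ≤ γ_max·S²`, hence `‖Nθ‖_{V⁻¹} ≤ S·√γ_max`. -/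
theorem channel_noise_bias_bound {d : ℕ}
    (V N : Matrix (Fin d) (Fin d) ℝ) (hV : V.PosDef) (hN : N.PosSemidef)
    (hVN : (V - N).PosSemidef) (γmax S : ℝ)
    (hγ : ‖N‖ ≤ γmax) (θ : Fin d → ℝ)
    (hθ : Real.sqrt (θ ⬝ᵥ θ) ≤ S) :
    (N *ᵥ θ) ⬝ᵥ V⁻¹ *ᵥ (N *ᵥ θ) ≤ θ ⬝ᵥ N *ᵥ θ ∧
    θ ⬝ᵥ N *ᵥ θ ≤ γmax * S ^ 2 ∧
    Real.sqrt ((N *ᵥ θ) ⬝ᵥ V⁻¹ *ᵥ (N *ᵥ θ)) ≤ S * Real.sqrt γmax := by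
  have hS : 0 ≤ S := (Real.sqrt_nonneg _).trans hθ
  have hγ₀ : 0 ≤ γmax := (norm_nonneg _).trans hγ
  have hθθ : θ ⬝ᵥ θ ≤ S ^ 2 := (Real.sqrt_le_left hS).mp hθ
  have hbias := dotProduct_mulVec_nonsing_inv_le hV hN hVN θ
  have hquad : θ ⬝ᵥ N *ᵥ θ ≤ γmax * S ^ 2 :=
    (N.dotProduct_mulVec_self_le_l2_opNorm θ).trans <|
      mul_le_mul hγ hθθ (by simpa using dotProduct_star_self_nonneg θ) hγ₀
  refine ⟨hbias, hquad, ?_⟩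
  calc Real.sqrt ((N *ᵥ θ) ⬝ᵥ V⁻¹ *ᵥ (N *ᵥ θ))
      ≤ Real.sqrt (γmax * S ^ 2) := Real.sqrt_le_sqrt (hbias.trans hquad)
    _ = S * Real.sqrt γmax := by rw [Real.sqrt_mul hγ₀, Real.sqrt_sq hS, mul_comm]
end
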